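/- arXiv:1501.06774 — 8 statements merged into one kernel-verified Lean document; each statement's English description precedes it below -/
import Mathlib

section
/- Let (X, ≼, s) be an MCS Model. Then for all x₁, x₂, x₃ ∈ X, the inequality s'({x₁,x₂}) + s'({x₂,x₃}) ≤ s(x₂) + s'({x₁,x₃}) holds. -/
/-- In an MCS Model, `s'({x₁,x₂}) + s'({x₂,x₃}) ≤ s(x₂) + s'({x₁,x₃})`. -/
theorem mcs_aux_lemma {X : Type*} (le : X → X → Prop)
    (hrefl : ∀ x, le x x)
    (htrans : ∀ x y z, le x y → le y z → le x z)
    (hantisymm : ∀ x y, le x y → le y x → x = y)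
    (s : X → ℝ) (hs : ∀ x, 0 ≤ s x)
    (hS1 : ∀ x y, le x y → s x ≤ s y)
    (hS2 : ∀ x y, le x y → s x = s y → x = y)
    (s' : X → X → ℝ)
    (hA1 : ∀ x y, IsGreatest {t : ℝ | ∃ z, le z x ∧ le z y ∧ s z = t} (s' x y))
    (hA2 : ∀ x y w, le x w → le y w → ∃ z, le z x ∧ le z y ∧ s x + s y - s z ≤ s w) :
    ∀ x₁ x₂ x₃ : X, s' x₁ x₂ + s' x₂ x₃ ≤ s x₂ + s' x₁ x₃ := by
  intro x₁ x₂ x₃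
  obtain ⟨a, ha1, ha2, hsa⟩ := (hA1 x₁ x₂).1
  obtain ⟨b, hb2, hb3, hsb⟩ := (hA1 x₂ x₃).1
  obtain ⟨z, hza, hzb, hz⟩ := hA2 a b x₂ ha2 hb2
  have hz13 : s z ≤ s' x₁ x₃ :=
    (hA1 x₁ x₃).2 ⟨z, htrans _ _ _ hza ha1, htrans _ _ _ hzb hb3, rfl⟩
  linarith
end

section
/- Let (X, ≼, s) be an MCS Model. Then the function d_a(x₁,x₂) = s(x₁) + s(x₂) − 2·s'({x₁,x₂}) is a metric on X: it is nonnegative, d_a(x,x) = 0, it is symmetric, it satisfies the triangle inequality, and d_a(x₁,x₂) = 0 implies x₁ = x₂. -/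
/-- In an MCS Model, `d_a(x₁,x₂) = s(x₁) + s(x₂) − 2·s'({x₁,x₂})`
is a metric on `X`. -/
theorem mcs_da_is_metric {X : Type*} (le : X → X → Prop)
    (hrefl : ∀ x, le x x)
    (htrans : ∀ x y z, le x y → le y z → le x z)
    (hantisymm : ∀ x y, le x y → le y x → x = y)
    (s : X → ℝ) (hs : ∀ x, 0 ≤ s x)
    (hS1 : ∀ x y, le x y → s x ≤ s y)
    (hS2 : ∀ x y, le x y → s x = s y → x = y)
    (s' : X → X → ℝ)
    (hA1 : ∀ x y, IsGreatest {t : ℝ | ∃ z, le z x ∧ le z y ∧ s z = t} (s' x y))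
    (hA2 : ∀ x y w, le x w → le y w → ∃ z, le z x ∧ le z y ∧ s x + s y - s z ≤ s w)
    (d : X → X → ℝ)
    (hd : ∀ x₁ x₂, d x₁ x₂ = s x₁ + s x₂ - 2 * s' x₁ x₂) :
    (∀ x₁ x₂, 0 ≤ d x₁ x₂) ∧
    (∀ x, d x x = 0) ∧
    (∀ x₁ x₂, d x₁ x₂ = d x₂ x₁) ∧
    (∀ x₁ x₂ x₃, d x₁ x₃ ≤ d x₁ x₂ + d x₂ x₃) ∧
    (∀ x₁ x₂, d x₁ x₂ = 0 → x₁ = x₂) := by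
  -- basic facts about s'
  have hmem : ∀ x y, ∃ z, le z x ∧ le z y ∧ s z = s' x y := fun x y => (hA1 x y).1
  have hle1 : ∀ x y, s' x y ≤ s x := by
    intro x y
    obtain ⟨z, hzx, _, hz⟩ := hmem x y
    exact hz ▸ hS1 z x hzx
  have hle2 : ∀ x y, s' x y ≤ s y := by
    intro x y
    obtain ⟨z, _, hzy, hz⟩ := hmem x y
    exact hz ▸ hS1 z y hzy
  have hsymm : ∀ x y, s' x y = s' y x := by
    intro x y
    obtain ⟨z, hzx, hzy, hz⟩ := hmem x y
    obtain ⟨w, hwy, hwx, hw⟩ := hmem y x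
    have h1 : s' x y ≤ s' y x := hz ▸ (hA1 y x).2 ⟨z, hzy, hzx, rfl⟩
    have h2 : s' y x ≤ s' x y := hw ▸ (hA1 x y).2 ⟨w, hwx, hwy, rfl⟩
    linarith
  have hself : ∀ x, s' x x = s x := by
    intro x
    have h1 : s x ≤ s' x x := (hA1 x x).2 ⟨x, hrefl x, hrefl x, rfl⟩
    linarith [hle1 x x]
  refine ⟨?_, ?_, ?_, ?_, ?_⟩
  · intro x₁ x₂; rw [hd]; linarith [hle1 x₁ x₂, hle2 x₁ x₂]
  · intro x; rw [hd, hself]; ring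
  · intro x₁ x₂; rw [hd, hd, hsymm]; ring
  · intro x₁ x₂ x₃
    rw [hd, hd, hd]
    obtain ⟨z₁, hz₁1, hz₁2, hz₁⟩ := hmem x₁ x₂
    obtain ⟨z₂, hz₂2, hz₂3, hz₂⟩ := hmem x₂ x₃
    obtain ⟨z, hzz₁, hzz₂, hzs⟩ := hA2 z₁ z₂ x₂ hz₁2 hz₂2
    have hzmem : s z ≤ s' x₁ x₃ :=
      (hA1 x₁ x₃).2 ⟨z, htrans z z₁ x₁ hzz₁ hz₁1, htrans z z₂ x₃ hzz₂ hz₂3, rfl⟩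
    linarith
  · intro x₁ x₂ h0
    rw [hd] at h0
    obtain ⟨z, hz1, hz2, hz⟩ := hmem x₁ x₂
    have h1 : s' x₁ x₂ = s x₁ := le_antisymm (hle1 x₁ x₂) (by linarith [hle2 x₁ x₂])
    have h2 : s' x₁ x₂ = s x₂ := le_antisymm (hle2 x₁ x₂) (by linarith [hle1 x₁ x₂])
    have e1 : z = x₁ := hS2 z x₁ hz1 (by rw [hz, h1])
    have e2 : z = x₂ := hS2 z x₂ hz2 (by rw [hz, h2])
    exact e1 ▸ e2
end

section
/- Let (X, ≼, s) be an MCS Model. Then the function d_b(x₁,x₂) = max{s(x₁), s(x₂)} − s'({x₁,x₂}) is a metric on X: it is nonnegative, d_b(x,x) = 0, it is symmetric, it satisfies the triangle inequality, and d_b(x₁,x₂) = 0 implies x₁ = x₂. -/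
/-- In an MCS Model, `d_b(x₁,x₂) = max{s(x₁),s(x₂)} − s'({x₁,x₂})`
is a metric on `X`. -/
theorem mcs_db_is_metric {X : Type*} (le : X → X → Prop)
    (hrefl : ∀ x, le x x)
    (htrans : ∀ x y z, le x y → le y z → le x z)
    (hantisymm : ∀ x y, le x y → le y x → x = y)
    (s : X → ℝ) (hs : ∀ x, 0 ≤ s x)
    (hS1 : ∀ x y, le x y → s x ≤ s y)
    (hS2 : ∀ x y, le x y → s x = s y → x = y)
    (s' : X → X → ℝ)
    (hA1 : ∀ x y, IsGreatest {t : ℝ | ∃ z, le z x ∧ le z y ∧ s z = t} (s' x y))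
    (hA2 : ∀ x y w, le x w → le y w → ∃ z, le z x ∧ le z y ∧ s x + s y - s z ≤ s w)
    (d : X → X → ℝ)
    (hd : ∀ x₁ x₂, d x₁ x₂ = max (s x₁) (s x₂) - s' x₁ x₂) :
    (∀ x₁ x₂, 0 ≤ d x₁ x₂) ∧
    (∀ x, d x x = 0) ∧
    (∀ x₁ x₂, d x₁ x₂ = d x₂ x₁) ∧
    (∀ x₁ x₂ x₃, d x₁ x₃ ≤ d x₁ x₂ + d x₂ x₃) ∧
    (∀ x₁ x₂, d x₁ x₂ = 0 → x₁ = x₂) := by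
  -- s' x y ≤ s x
  have hle1 : ∀ x y, s' x y ≤ s x := by
    intro x y
    obtain ⟨z, hzx, _, hz⟩ := (hA1 x y).1
    exact hz ▸ hS1 z x hzx
  have hle2 : ∀ x y, s' x y ≤ s y := by
    intro x y
    obtain ⟨z, _, hzy, hz⟩ := (hA1 x y).1
    exact hz ▸ hS1 z y hzy
  have hsymm : ∀ x y, s' x y = s' y x := by
    intro x y
    apply le_antisymm
    · obtain ⟨z, hzx, hzy, hz⟩ := (hA1 x y).1
      exact (hA1 y x).2 ⟨z, hzy, hzx, hz⟩
    · obtain ⟨z, hzy, hzx, hz⟩ := (hA1 y x).1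
      exact (hA1 x y).2 ⟨z, hzx, hzy, hz⟩
  refine ⟨?_, ?_, ?_, ?_, ?_⟩
  · intro x₁ x₂
    rw [hd]
    have := hle1 x₁ x₂
    have := le_max_left (s x₁) (s x₂)
    linarith
  · intro x
    rw [hd]
    have h1 : s' x x ≤ s x := hle1 x x
    have h2 : s x ≤ s' x x := (hA1 x x).2 ⟨x, hrefl x, hrefl x, rfl⟩
    simp [le_antisymm h1 h2]
  · intro x₁ x₂
    rw [hd, hd, hsymm, max_comm]
  · intro x₁ x₂ x₃
    obtain ⟨z₁, hz₁1, hz₁2, hz₁⟩ := (hA1 x₁ x₂).1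
    obtain ⟨z₂, hz₂2, hz₂3, hz₂⟩ := (hA1 x₂ x₃).1
    obtain ⟨z, hz1, hz2, hzineq⟩ := hA2 z₁ z₂ x₂ hz₁2 hz₂2
    have hz13 : s z ≤ s' x₁ x₃ :=
      (hA1 x₁ x₃).2 ⟨z, htrans z z₁ x₁ hz1 hz₁1, htrans z z₂ x₃ hz2 hz₂3, rfl⟩
    have hmax : max (s x₁) (s x₃) + s x₂ ≤ max (s x₁) (s x₂) + max (s x₂) (s x₃) := by
      rcases max_cases (s x₁) (s x₃) with ⟨h, _⟩ | ⟨h, _⟩ <;> rw [h]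
      · have := le_max_left (s x₁) (s x₂)
        have := le_max_left (s x₂) (s x₃)
        linarith
      · have := le_max_right (s x₂) (s x₃)
        have := le_max_right (s x₁) (s x₂)
        linarith
    rw [hd, hd, hd]
    linarith [hz₁ ▸ hz₂ ▸ hzineq]
  · intro x₁ x₂ h
    rw [hd] at h
    obtain ⟨z, hzx₁, hzx₂, hz⟩ := (hA1 x₁ x₂).1
    have h1 : s z ≤ s x₁ := hS1 z x₁ hzx₁
    have h2 : s z ≤ s x₂ := hS1 z x₂ hzx₂
    have hm1 := le_max_left (s x₁) (s x₂)
    have hm2 := le_max_right (s x₁) (s x₂)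
    have e1 : s z = s x₁ := by linarith
    have e2 : s z = s x₂ := by linarith
    rw [← hS2 z x₁ hzx₁ e1, ← hS2 z x₂ hzx₂ e2]
end

section
/- Let (X, ≼, s) be an MCS Model. Define d_c(x₁,x₂) = 0 if s(x₁) = s(x₂) = 0, and d_c(x₁,x₂) = 1 − s'({x₁,x₂}) / max{s(x₁), s(x₂)} otherwise. Then d_c is a metric on X: it is nonnegative, d_c(x,x) = 0, it is symmetric, it satisfies the triangle inequality, and d_c(x₁,x₂) = 0 implies x₁ = x₂. -/
/-! By (S2), a common subelement of `x` and `y` whose size equals both `s x` and `s y` is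
`x` and `y` at once; hence there is at most one element of size `0`, `d_c` is given by the
quotient formula off the diagonal, and `d_c(x,y) = 0` forces `x = y`. For the triangle
inequality assume `s x₁ ≤ s x₃`. Axiom (A2), applied below `x₂` to maximal common subelements
of `{x₁, x₂}` and `{x₂, x₃}`, gives `s'(x₁,x₂) + s'(x₂,x₃) - s x₂ ≤ s'(x₁,x₃)`, and an
elementary estimate on quotients by maxima turns this into the triangle inequality. -/

lemma div_max_add_div_max_le {a b c p q r : ℝ} (hp : 0 ≤ p) (hpa : p ≤ a) (hpb : p ≤ b)
    (hac : a ≤ c) (hc : 0 < c) (hr : 0 ≤ r) (hpqr : p + q - b ≤ r) :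
    p / max a b + q / max b c ≤ 1 + r / c := by
  have hmn : max a b ≤ max b c := max_le (hac.trans (le_max_right _ _)) (le_max_left _ _)
  have hn : 0 < max b c := hc.trans_le (le_max_right _ _)
  have hp_max : p / max a b ≤ 1 - (b - p) / max b c := by
    rcases (hp.trans hpb |>.trans (le_max_right a b)).eq_or_lt with hm | hm
    · have hb : b = p := by linarith [le_max_right a b]
      rw [← hm, hb]
      simp
    · calc p / max a b = 1 - (max a b - p) / max a b := by field_simp; ring
        _ ≤ 1 - (max a b - p) / max b c := by
          gcongr; linarith [le_max_left a b]
        _ ≤ 1 - (b - p) / max b c := by gcongr; exact le_max_right a b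
  calc p / max a b + q / max b c ≤ 1 + (p + q - b) / max b c := by
        have : (p + q - b) / max b c = q / max b c - (b - p) / max b c := by ring
        linarith
    _ ≤ 1 + r / max b c := by gcongr
    _ ≤ 1 + r / c := by gcongr; exact le_max_right b c

def IsMaxCommonSize {X : Type*} (le : X → X → Prop) (s : X → ℝ) (s' : X → X → ℝ) : Prop :=
  ∀ x y, IsGreatest {t : ℝ | ∃ z, le z x ∧ le z y ∧ s z = t} (s' x y)

namespace IsMaxCommonSize

variable {X : Type*} {le : X → X → Prop} {s : X → ℝ} {s' : X → X → ℝ}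

theorem exists_size_eq (hA1 : IsMaxCommonSize le s s') (x y : X) :
    ∃ z, le z x ∧ le z y ∧ s z = s' x y :=
  (hA1 x y).1

theorem size_le {x y z : X} (hA1 : IsMaxCommonSize le s s') (hzx : le z x) (hzy : le z y) :
    s z ≤ s' x y :=
  (hA1 x y).2 ⟨z, hzx, hzy, rfl⟩

theorem le_left (hA1 : IsMaxCommonSize le s s') (hS1 : ∀ x y, le x y → s x ≤ s y) (x y : X) :
    s' x y ≤ s x := by
  obtain ⟨z, hzx, -, hz⟩ := hA1.exists_size_eq x y
  exact hz ▸ hS1 z x hzx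

theorem le_right (hA1 : IsMaxCommonSize le s s') (hS1 : ∀ x y, le x y → s x ≤ s y) (x y : X) :
    s' x y ≤ s y := by
  obtain ⟨z, -, hzy, hz⟩ := hA1.exists_size_eq x y
  exact hz ▸ hS1 z y hzy

theorem nonneg (hA1 : IsMaxCommonSize le s s') (hs : ∀ x, 0 ≤ s x) (x y : X) : 0 ≤ s' x y := by
  obtain ⟨z, -, -, hz⟩ := hA1.exists_size_eq x y
  exact hz ▸ hs z

theorem comm (hA1 : IsMaxCommonSize le s s') (x y : X) : s' x y = s' y x := by
  obtain ⟨z, hzx, hzy, hz⟩ := hA1.exists_size_eq x y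
  obtain ⟨w, hwy, hwx, hw⟩ := hA1.exists_size_eq y x
  exact le_antisymm (hz ▸ hA1.size_le hzy hzx) (hw ▸ hA1.size_le hwx hwy)

theorem self_eq (hA1 : IsMaxCommonSize le s s') (hrefl : ∀ x, le x x)
    (hS1 : ∀ x y, le x y → s x ≤ s y) (x : X) : s' x x = s x :=
  le_antisymm (hA1.le_left hS1 x x) (hA1.size_le (hrefl x) (hrefl x))

theorem eq_of_eq_left_of_eq_right {x y : X} (hA1 : IsMaxCommonSize le s s')
    (hS2 : ∀ x y, le x y → s x = s y → x = y) (hx : s' x y = s x) (hy : s' x y = s y) :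
    x = y := by
  obtain ⟨z, hzx, hzy, hz⟩ := hA1.exists_size_eq x y
  exact (hS2 z x hzx (hz.trans hx)).symm.trans (hS2 z y hzy (hz.trans hy))

theorem eq_of_size_eq_zero {x y : X} (hA1 : IsMaxCommonSize le s s') (hs : ∀ x, 0 ≤ s x)
    (hS1 : ∀ x y, le x y → s x ≤ s y) (hS2 : ∀ x y, le x y → s x = s y → x = y)
    (hx : s x = 0) (hy : s y = 0) : x = y := by
  have h0 : s' x y = 0 := le_antisymm (hx ▸ hA1.le_left hS1 x y) (hA1.nonneg hs x y)
  exact hA1.eq_of_eq_left_of_eq_right hS2 (h0.trans hx.symm) (h0.trans hy.symm)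

theorem add_sub_le (hA1 : IsMaxCommonSize le s s') (htrans : ∀ x y z, le x y → le y z → le x z)
    (hA2 : ∀ x y w, le x w → le y w → ∃ z, le z x ∧ le z y ∧ s x + s y - s z ≤ s w)
    (x₁ x₂ x₃ : X) : s' x₁ x₂ + s' x₂ x₃ - s x₂ ≤ s' x₁ x₃ := by
  obtain ⟨z₁₂, hz₁₂_le₁, hz₁₂_le₂, hz₁₂⟩ := hA1.exists_size_eq x₁ x₂
  obtain ⟨z₂₃, hz₂₃_le₂, hz₂₃_le₃, hz₂₃⟩ := hA1.exists_size_eq x₂ x₃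
  obtain ⟨z, hz_le₁₂, hz_le₂₃, hz⟩ := hA2 z₁₂ z₂₃ x₂ hz₁₂_le₂ hz₂₃_le₂
  have : s z ≤ s' x₁ x₃ :=
    hA1.size_le (htrans _ _ _ hz_le₁₂ hz₁₂_le₁) (htrans _ _ _ hz_le₂₃ hz₂₃_le₃)
  linarith

end IsMaxCommonSize

noncomputable def mcsDist {X : Type*} (s : X → ℝ) (s' : X → X → ℝ) (x y : X) : ℝ :=
  if s x = 0 ∧ s y = 0 then 0 else 1 - s' x y / max (s x) (s y)

section mcsDist

variable {X : Type*} {le : X → X → Prop} {s : X → ℝ} {s' : X → X → ℝ}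

theorem mcsDist_self (hA1 : IsMaxCommonSize le s s') (hrefl : ∀ x, le x x)
    (hS1 : ∀ x y, le x y → s x ≤ s y) (x : X) : mcsDist s s' x x = 0 := by
  unfold mcsDist
  split_ifs with h
  · rfl
  · rw [hA1.self_eq hrefl hS1, max_self, div_self (by tauto), sub_self]

theorem mcsDist_comm (hA1 : IsMaxCommonSize le s s') (x y : X) :
    mcsDist s s' x y = mcsDist s s' y x := by
  simp only [mcsDist, and_comm, hA1.comm x y, max_comm]

theorem mcsDist_nonneg (hA1 : IsMaxCommonSize le s s') (hs : ∀ x, 0 ≤ s x)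
    (hS1 : ∀ x y, le x y → s x ≤ s y) (x y : X) : 0 ≤ mcsDist s s' x y := by
  unfold mcsDist
  split_ifs
  · rfl
  · have := div_le_one_of_le₀ ((hA1.le_left hS1 x y).trans (le_max_left _ (s y)))
      ((hs x).trans (le_max_left _ (s y)))
    linarith

theorem mcsDist_of_ne {x y : X} (hA1 : IsMaxCommonSize le s s') (hs : ∀ x, 0 ≤ s x)
    (hS1 : ∀ x y, le x y → s x ≤ s y) (hS2 : ∀ x y, le x y → s x = s y → x = y) (hxy : x ≠ y) :
    mcsDist s s' x y = 1 - s' x y / max (s x) (s y) :=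
  if_neg fun h => hxy (hA1.eq_of_size_eq_zero hs hS1 hS2 h.1 h.2)

theorem max_size_pos_of_ne {x y : X} (hA1 : IsMaxCommonSize le s s') (hs : ∀ x, 0 ≤ s x)
    (hS1 : ∀ x y, le x y → s x ≤ s y) (hS2 : ∀ x y, le x y → s x = s y → x = y) (hxy : x ≠ y) :
    0 < max (s x) (s y) := by
  refine (le_max_of_le_left (hs x)).lt_of_ne fun h => hxy ?_
  exact hA1.eq_of_size_eq_zero hs hS1 hS2
    (le_antisymm (h ▸ le_max_left _ _) (hs x)) (le_antisymm (h ▸ le_max_right _ _) (hs y))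

theorem eq_of_mcsDist_eq_zero {x y : X} (hA1 : IsMaxCommonSize le s s') (hs : ∀ x, 0 ≤ s x)
    (hS1 : ∀ x y, le x y → s x ≤ s y) (hS2 : ∀ x y, le x y → s x = s y → x = y)
    (h : mcsDist s s' x y = 0) : x = y := by
  by_contra hxy
  rw [mcsDist_of_ne hA1 hs hS1 hS2 hxy, sub_eq_zero, eq_comm,
    div_eq_one_iff_eq (max_size_pos_of_ne hA1 hs hS1 hS2 hxy).ne'] at h
  exact hxy <| hA1.eq_of_eq_left_of_eq_right hS2
    (le_antisymm (hA1.le_left hS1 x y) (h ▸ le_max_left _ _))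
    (le_antisymm (hA1.le_right hS1 x y) (h ▸ le_max_right _ _))

theorem mcsDist_triangle_of_le {x₁ x₂ x₃ : X} (hA1 : IsMaxCommonSize le s s')
    (hrefl : ∀ x, le x x) (htrans : ∀ x y z, le x y → le y z → le x z) (hs : ∀ x, 0 ≤ s x)
    (hS1 : ∀ x y, le x y → s x ≤ s y) (hS2 : ∀ x y, le x y → s x = s y → x = y)
    (hA2 : ∀ x y w, le x w → le y w → ∃ z, le z x ∧ le z y ∧ s x + s y - s z ≤ s w)
    (h₁₃ : s x₁ ≤ s x₃) :
    mcsDist s s' x₁ x₃ ≤ mcsDist s s' x₁ x₂ + mcsDist s s' x₂ x₃ := by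
  rcases eq_or_ne x₁ x₂ with rfl | hx₁₂
  · rw [mcsDist_self hA1 hrefl hS1, zero_add]
  rcases eq_or_ne x₂ x₃ with rfl | hx₂₃
  · rw [mcsDist_self hA1 hrefl hS1, add_zero]
  rcases eq_or_ne x₁ x₃ with rfl | hx₁₃
  · rw [mcsDist_self hA1 hrefl hS1]
    exact add_nonneg (mcsDist_nonneg hA1 hs hS1 _ _) (mcsDist_nonneg hA1 hs hS1 _ _)
  have hx₃ : 0 < s x₃ := max_eq_right h₁₃ ▸ max_size_pos_of_ne hA1 hs hS1 hS2 hx₁₃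
  rw [mcsDist_of_ne hA1 hs hS1 hS2 hx₁₂, mcsDist_of_ne hA1 hs hS1 hS2 hx₂₃,
    mcsDist_of_ne hA1 hs hS1 hS2 hx₁₃, max_eq_right h₁₃]
  linarith [div_max_add_div_max_le (hA1.nonneg hs x₁ x₂) (hA1.le_left hS1 x₁ x₂)
    (hA1.le_right hS1 x₁ x₂) h₁₃ hx₃ (hA1.nonneg hs x₁ x₃) (hA1.add_sub_le htrans hA2 x₁ x₂ x₃)]

theorem mcsDist_triangle (hA1 : IsMaxCommonSize le s s')
    (hrefl : ∀ x, le x x) (htrans : ∀ x y z, le x y → le y z → le x z) (hs : ∀ x, 0 ≤ s x)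
    (hS1 : ∀ x y, le x y → s x ≤ s y) (hS2 : ∀ x y, le x y → s x = s y → x = y)
    (hA2 : ∀ x y w, le x w → le y w → ∃ z, le z x ∧ le z y ∧ s x + s y - s z ≤ s w)
    (x₁ x₂ x₃ : X) : mcsDist s s' x₁ x₃ ≤ mcsDist s s' x₁ x₂ + mcsDist s s' x₂ x₃ := by
  rcases le_total (s x₁) (s x₃) with h | h
  · exact mcsDist_triangle_of_le hA1 hrefl htrans hs hS1 hS2 hA2 h
  · rw [mcsDist_comm hA1 x₁ x₃, mcsDist_comm hA1 x₁ x₂, mcsDist_comm hA1 x₂ x₃, add_comm]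
    exact mcsDist_triangle_of_le hA1 hrefl htrans hs hS1 hS2 hA2 h

end mcsDist

theorem mcs_dc_is_metric_general {X : Type*} (le : X → X → Prop)
    (hrefl : ∀ x, le x x)
    (htrans : ∀ x y z, le x y → le y z → le x z)
    (s : X → ℝ) (hs : ∀ x, 0 ≤ s x)
    (hS1 : ∀ x y, le x y → s x ≤ s y)
    (hS2 : ∀ x y, le x y → s x = s y → x = y)
    (s' : X → X → ℝ)
    (hA1 : ∀ x y, IsGreatest {t : ℝ | ∃ z, le z x ∧ le z y ∧ s z = t} (s' x y))
    (hA2 : ∀ x y w, le x w → le y w → ∃ z, le z x ∧ le z y ∧ s x + s y - s z ≤ s w)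
    (d : X → X → ℝ)
    (hd0 : ∀ x₁ x₂, s x₁ = 0 → s x₂ = 0 → d x₁ x₂ = 0)
    (hd1 : ∀ x₁ x₂, ¬ (s x₁ = 0 ∧ s x₂ = 0) →
      d x₁ x₂ = 1 - s' x₁ x₂ / max (s x₁) (s x₂)) :
    (∀ x₁ x₂, 0 ≤ d x₁ x₂) ∧
    (∀ x, d x x = 0) ∧
    (∀ x₁ x₂, d x₁ x₂ = d x₂ x₁) ∧
    (∀ x₁ x₂ x₃, d x₁ x₃ ≤ d x₁ x₂ + d x₂ x₃) ∧
    (∀ x₁ x₂, d x₁ x₂ = 0 → x₁ = x₂) := by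
  obtain rfl : d = mcsDist s s' := funext₂ fun x y => by
    unfold mcsDist
    split_ifs with h
    exacts [hd0 x y h.1 h.2, hd1 x y h]
  exact ⟨mcsDist_nonneg hA1 hs hS1, mcsDist_self hA1 hrefl hS1, mcsDist_comm hA1,
    mcsDist_triangle hA1 hrefl htrans hs hS1 hS2 hA2,
    fun _ _ => eq_of_mcsDist_eq_zero hA1 hs hS1 hS2⟩

/-- In an MCS Model, `d_c(x₁,x₂) = 0` if `s(x₁) = s(x₂) = 0` and
`d_c(x₁,x₂) = 1 − s'({x₁,x₂}) / max{s(x₁),s(x₂)}` otherwise, is a metric on `X`. -/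
theorem mcs_dc_is_metric {X : Type*} (le : X → X → Prop)
    (hrefl : ∀ x, le x x)
    (htrans : ∀ x y z, le x y → le y z → le x z)
    (hantisymm : ∀ x y, le x y → le y x → x = y)
    (s : X → ℝ) (hs : ∀ x, 0 ≤ s x)
    (hS1 : ∀ x y, le x y → s x ≤ s y)
    (hS2 : ∀ x y, le x y → s x = s y → x = y)
    (s' : X → X → ℝ)
    (hA1 : ∀ x y, IsGreatest {t : ℝ | ∃ z, le z x ∧ le z y ∧ s z = t} (s' x y))
    (hA2 : ∀ x y w, le x w → le y w → ∃ z, le z x ∧ le z y ∧ s x + s y - s z ≤ s w)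
    (d : X → X → ℝ)
    (hd0 : ∀ x₁ x₂, s x₁ = 0 → s x₂ = 0 → d x₁ x₂ = 0)
    (hd1 : ∀ x₁ x₂, ¬ (s x₁ = 0 ∧ s x₂ = 0) →
      d x₁ x₂ = 1 - s' x₁ x₂ / max (s x₁) (s x₂)) :
    (∀ x₁ x₂, 0 ≤ d x₁ x₂) ∧
    (∀ x, d x x = 0) ∧
    (∀ x₁ x₂, d x₁ x₂ = d x₂ x₁) ∧
    (∀ x₁ x₂ x₃, d x₁ x₃ ≤ d x₁ x₂ + d x₂ x₃) ∧
    (∀ x₁ x₂, d x₁ x₂ = 0 → x₁ = x₂) :=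
  mcs_dc_is_metric_general le hrefl htrans s hs hS1 hS2 s' hA1 hA2 d hd0 hd1
end

section
/- Let x₁, x₂, x₃ and m₁₂, m₂₃, m₁₃ be nonnegative real numbers satisfying m₁₂ + m₂₃ ≤ x₂ + m₁₃, m₁₂ ≤ min{x₁, x₂}, m₂₃ ≤ min{x₂, x₃}, m₁₃ ≤ min{x₁, x₃}, and assume max{x₁,x₂} > 0, max{x₂,x₃} > 0 and max{x₁,x₃} > 0. Then 1 + m₁₃/max{x₁,x₃} − m₁₂/max{x₁,x₂} − m₂₃/max{x₂,x₃} ≥ 0. -/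
set_option maxHeartbeats 1600000

/-- The arithmetic core of the triangle-inequality proof for the
metric `d_c(x₁,x₂) = 1 − s'({x₁,x₂})/max{s(x₁),s(x₂)}` on an MCS Model. -/
theorem dc_key_inequality (x₁ x₂ x₃ m₁₂ m₂₃ m₁₃ : ℝ)
    (hx₁ : 0 ≤ x₁) (hx₂ : 0 ≤ x₂) (hx₃ : 0 ≤ x₃)
    (hm₁₂ : 0 ≤ m₁₂) (hm₂₃ : 0 ≤ m₂₃) (hm₁₃ : 0 ≤ m₁₃)
    (haux : m₁₂ + m₂₃ ≤ x₂ + m₁₃)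
    (hm₁₂le : m₁₂ ≤ min x₁ x₂) (hm₂₃le : m₂₃ ≤ min x₂ x₃) (hm₁₃le : m₁₃ ≤ min x₁ x₃)
    (hpos₁₂ : 0 < max x₁ x₂) (hpos₂₃ : 0 < max x₂ x₃) (hpos₁₃ : 0 < max x₁ x₃) :
    0 ≤ 1 + m₁₃ / max x₁ x₃ - m₁₂ / max x₁ x₂ - m₂₃ / max x₂ x₃ := by
  have a1 : m₁₂ ≤ x₁ := hm₁₂le.trans (min_le_left _ _)
  have a2 : m₁₂ ≤ x₂ := hm₁₂le.trans (min_le_right _ _)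
  have b2 : m₂₃ ≤ x₂ := hm₂₃le.trans (min_le_left _ _)
  have b3 : m₂₃ ≤ x₃ := hm₂₃le.trans (min_le_right _ _)
  have c1 : m₁₃ ≤ x₁ := hm₁₃le.trans (min_le_left _ _)
  have c3 : m₁₃ ≤ x₃ := hm₁₃le.trans (min_le_right _ _)
  rcases le_total x₁ x₂ with h12 | h12 <;>
    rcases le_total x₂ x₃ with h23 | h23 <;>
      rcases le_total x₁ x₃ with h13 | h13 <;>
  simp only [max_eq_right, max_eq_left, h12, h23, h13, le_refl,
    max_eq_right h12, max_eq_left h12, max_eq_right h23, max_eq_left h23,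
    max_eq_right h13, max_eq_left h13] at hpos₁₂ hpos₂₃ hpos₁₃ ⊢ <;>
  field_simp [hpos₁₂.ne', hpos₂₃.ne', hpos₁₃.ne'] <;>
  simp only [zero_mul] <;>
  nlinarith [mul_nonneg hx₁ (sub_nonneg.2 haux), mul_nonneg hx₂ (sub_nonneg.2 haux),
    mul_nonneg hx₃ (sub_nonneg.2 haux),
    mul_nonneg (sub_nonneg.2 h23) (sub_nonneg.2 a2), mul_nonneg hm₁₃ (sub_nonneg.2 h23),
    mul_nonneg hm₁₃ (sub_nonneg.2 h12), mul_nonneg (sub_nonneg.2 h13) (sub_nonneg.2 a1),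
    mul_nonneg hx₁ (sub_nonneg.2 h12), mul_nonneg (sub_nonneg.2 b3) (sub_nonneg.2 h13),
    mul_nonneg hm₂₃ (sub_nonneg.2 h23), mul_nonneg (sub_nonneg.2 h23) (sub_nonneg.2 b3),
    mul_nonneg (sub_nonneg.2 h12) (sub_nonneg.2 b2), hx₁, hx₂, hx₃]
end

section
/- Let Σ be a finite nonempty set and d : Σ × Σ → [0,∞) a metric on Σ. Then there exist a set X containing Σ, a partial order ≼ on X, and a size function s : X → [0,∞) such that (X, ≼, s) is an MCS Model (i.e., s satisfies (S1), (S2), (A1), (A2)), and for all σ₁, σ₂ ∈ Σ one has d(σ₁, σ₂) = s(σ₁) + s(σ₂) − 2·s'({σ₁, σ₂}). -/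
/-- Lemma "Metric Space to MCS Model": every metric `d` on a
finite nonempty set `Σ` extends to an MCS Model `(X, ≼, s)` on a superset `X`
of `Σ` (here: `Σ` embeds into `X`) in which
`d(σ₁,σ₂) = s(σ₁) + s(σ₂) − 2·s'({σ₁,σ₂})`. -/
theorem metric_space_to_mcs_model {σ : Type} [Fintype σ] [Nonempty σ]
    (d : σ → σ → ℝ)
    (hd_self : ∀ a, d a a = 0)
    (hd_symm : ∀ a b, d a b = d b a)
    (hd_triangle : ∀ a b c, d a c ≤ d a b + d b c)
    (hd_eq : ∀ a b, d a b = 0 → a = b) :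
    ∃ (X : Type) (ι : σ ↪ X) (le : X → X → Prop) (s : X → ℝ) (s' : X → X → ℝ),
      (∀ x, le x x) ∧
      (∀ x y z, le x y → le y z → le x z) ∧
      (∀ x y, le x y → le y x → x = y) ∧
      (∀ x, 0 ≤ s x) ∧
      (∀ x y, le x y → s x ≤ s y) ∧
      (∀ x y, le x y → s x = s y → x = y) ∧
      (∀ x y, IsGreatest {t : ℝ | ∃ z, le z x ∧ le z y ∧ s z = t} (s' x y)) ∧
      (∀ x y w, le x w → le y w → ∃ z, le z x ∧ le z y ∧ s x + s y - s z ≤ s w) ∧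
      (∀ a b : σ, d a b = s (ι a) + s (ι b) - 2 * s' (ι a) (ι b)) := by
  classical
  have hne : (Finset.univ : Finset σ).Nonempty := Finset.univ_nonempty
  have a0 : σ := Classical.arbitrary σ
  have hd0 : ∀ a b, 0 ≤ d a b := by
    intro a b
    have h1 := hd_triangle a b a
    have h2 := hd_symm a b
    have h3 := hd_self a
    linarith
  -- the bound C
  set C : ℝ := Finset.univ.sup' hne (fun a => Finset.univ.sup' hne (fun b => d a b))
    with hCdef
  have hdC : ∀ a b, d a b ≤ C := by
    intro a b
    have h1 : d a b ≤ Finset.univ.sup' hne (fun b => d a b) :=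
      Finset.le_sup' (fun b => d a b) (Finset.mem_univ b)
    have h2 : Finset.univ.sup' hne (fun b => d a b) ≤ C :=
      Finset.le_sup' (fun a => Finset.univ.sup' hne (fun b => d a b)) (Finset.mem_univ a)
    linarith
  -- sup distance on functions
  set D : (σ → ℝ) → (σ → ℝ) → ℝ :=
    fun y₁ y₂ => Finset.univ.sup' hne (fun c => |y₁ c - y₂ c|) with hDdef
  have hD_le : ∀ y₁ y₂ (t : ℝ), (∀ c, |y₁ c - y₂ c| ≤ t) → D y₁ y₂ ≤ t := by
    intro y₁ y₂ t h
    exact Finset.sup'_le hne _ (fun c _ => h c)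
  have hD_ge : ∀ y₁ y₂ (c : σ), |y₁ c - y₂ c| ≤ D y₁ y₂ := by
    intro y₁ y₂ c
    exact Finset.le_sup' (fun c => |y₁ c - y₂ c|) (Finset.mem_univ c)
  have hD_symm : ∀ y₁ y₂, D y₁ y₂ = D y₂ y₁ := by
    intro y₁ y₂
    simp only [hDdef]
    congr 1
    funext c
    rw [abs_sub_comm]
  -- the carrier
  refine ⟨{p : (σ → ℝ) × ℝ // (∀ a, |p.1 a| ≤ p.2) ∧ p.2 ≤ C},
    ⟨fun a => ⟨(fun c => d a c, C), ?_, le_refl C⟩, ?_⟩,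
    fun x y => ∀ a, |x.1.1 a - y.1.1 a| ≤ y.1.2 - x.1.2,
    fun x => x.1.2,
    fun x y => min x.1.2 (min y.1.2 ((x.1.2 + y.1.2 - D x.1.1 y.1.1) / 2)),
    ?_, ?_, ?_, ?_, ?_, ?_, ?_, ?_, ?_⟩
  · -- ι a lands in the cone
    intro c
    rw [abs_of_nonneg (hd0 a c)]
    exact hdC a c
  · -- injectivity of ι
    intro a b h
    have h1 : d a b = d b b := congrArg (fun x => x.1.1 b) h
    rw [hd_self b] at h1
    exact hd_eq a b h1
  · -- reflexivity
    intro x a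
    simp only [sub_self, abs_zero, le_refl]
  · -- transitivity
    intro x y z hxy hyz a
    have := abs_sub_le (x.1.1 a) (y.1.1 a) (z.1.1 a)
    have h1 := hxy a
    have h2 := hyz a
    linarith
  · -- antisymmetry
    intro x y hxy hyx
    have hr : x.1.2 = y.1.2 := by
      have h1 := hxy a0
      have h2 := hyx a0
      have h3 : (0:ℝ) ≤ |x.1.1 a0 - y.1.1 a0| := abs_nonneg _
      have h4 : (0:ℝ) ≤ |y.1.1 a0 - x.1.1 a0| := abs_nonneg _
      linarith
    have hf : x.1.1 = y.1.1 := by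
      funext a
      have h1 := hxy a
      have h2 : |x.1.1 a - y.1.1 a| = 0 :=
        le_antisymm (by linarith) (abs_nonneg _)
      exact sub_eq_zero.mp (abs_eq_zero.mp h2)
    exact Subtype.ext (Prod.ext hf hr)
  · -- s nonneg
    intro x
    exact le_trans (abs_nonneg _) (x.2.1 a0)
  · -- S1
    intro x y hxy
    have h1 := hxy a0
    have h2 : (0:ℝ) ≤ |x.1.1 a0 - y.1.1 a0| := abs_nonneg _
    linarith
  · -- S2
    intro x y hxy hs
    have hs' : x.1.2 = y.1.2 := hs
    have hf : x.1.1 = y.1.1 := by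
      funext a
      have h1 := hxy a
      have h2 : |x.1.1 a - y.1.1 a| = 0 :=
        le_antisymm (by linarith) (abs_nonneg _)
      exact sub_eq_zero.mp (abs_eq_zero.mp h2)
    exact Subtype.ext (Prod.ext hf hs')
  · -- A1 : IsGreatest
    intro x y
    have hx1 : ∀ a, |x.1.1 a| ≤ x.1.2 := x.2.1
    have hy1 : ∀ a, |y.1.1 a| ≤ y.1.2 := y.2.1
    have hx2 : x.1.2 ≤ C := x.2.2
    set m : ℝ := min x.1.2 (min y.1.2 ((x.1.2 + y.1.2 - D x.1.1 y.1.1) / 2)) with hmdef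
    have hm1 : m ≤ x.1.2 := min_le_left _ _
    have hm2 : m ≤ y.1.2 := le_trans (min_le_right _ _) (min_le_left _ _)
    have hm3 : m ≤ (x.1.2 + y.1.2 - D x.1.1 y.1.1) / 2 :=
      le_trans (min_le_right _ _) (min_le_right _ _)
    have hr1 : 0 ≤ x.1.2 := le_trans (abs_nonneg _) (hx1 a0)
    have hr2 : 0 ≤ y.1.2 := le_trans (abs_nonneg _) (hy1 a0)
    have hDtri : D x.1.1 y.1.1 ≤ x.1.2 + y.1.2 := by
      apply hD_le
      intro c
      calc |x.1.1 c - y.1.1 c| ≤ |x.1.1 c| + |y.1.1 c| := abs_sub _ _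
        _ ≤ x.1.2 + y.1.2 := add_le_add (hx1 c) (hy1 c)
    have hm0 : 0 ≤ m := by
      apply le_min hr1 (le_min hr2 _)
      linarith
    set zf : σ → ℝ :=
      fun a => max (x.1.1 a - (x.1.2 - m)) (max (y.1.1 a - (y.1.2 - m)) (-m)) with hzfdef
    have hz1 : ∀ a, |zf a - x.1.1 a| ≤ x.1.2 - m := by
      intro a
      rw [abs_le]
      constructor
      · have : x.1.1 a - (x.1.2 - m) ≤ zf a := le_max_left _ _
        linarith
      · have : zf a ≤ x.1.1 a + (x.1.2 - m) := by
          apply max_le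
          · linarith
          apply max_le
          · have h1 : |y.1.1 a - x.1.1 a| ≤ D x.1.1 y.1.1 := by
              rw [hD_symm]; exact hD_ge _ _ a
            have h3 : y.1.1 a - x.1.1 a ≤ D x.1.1 y.1.1 :=
              le_trans (le_abs_self _) h1
            linarith
          · have h4 : -(x.1.1 a) ≤ x.1.2 := le_trans (neg_le_abs _) (hx1 a)
            linarith
        linarith
    have hz2 : ∀ a, |zf a - y.1.1 a| ≤ y.1.2 - m := by
      intro a
      rw [abs_le]
      constructor
      · have : y.1.1 a - (y.1.2 - m) ≤ zf a :=
          le_trans (le_max_left _ _) (le_max_right _ _)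
        linarith
      · have : zf a ≤ y.1.1 a + (y.1.2 - m) := by
          apply max_le
          · have h3 : x.1.1 a - y.1.1 a ≤ D x.1.1 y.1.1 :=
              le_trans (le_abs_self _) (hD_ge _ _ a)
            linarith
          apply max_le
          · linarith
          · have h4 : -(y.1.1 a) ≤ y.1.2 := le_trans (neg_le_abs _) (hy1 a)
            linarith
        linarith
    have hzcone : ∀ a, |zf a| ≤ m := by
      intro a
      rw [abs_le]
      constructor
      · exact le_trans (le_max_right _ _) (le_max_right _ _)
      · apply max_le
        · have h4 : x.1.1 a ≤ x.1.2 := le_trans (le_abs_self _) (hx1 a)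
          linarith
        apply max_le
        · have h4 : y.1.1 a ≤ y.1.2 := le_trans (le_abs_self _) (hy1 a)
          linarith
        · linarith
    constructor
    · exact ⟨⟨(zf, m), hzcone, le_trans hm1 hx2⟩, hz1, hz2, rfl⟩
    · rintro t ⟨z, hzx, hzy, rfl⟩
      apply le_min
      · have h1 := hzx a0
        have h2 : (0:ℝ) ≤ |z.1.1 a0 - x.1.1 a0| := abs_nonneg _
        linarith
      apply le_min
      · have h1 := hzy a0
        have h2 : (0:ℝ) ≤ |z.1.1 a0 - y.1.1 a0| := abs_nonneg _
        linarith
      · have hDz : D x.1.1 y.1.1 ≤ (x.1.2 - z.1.2) + (y.1.2 - z.1.2) := by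
          apply hD_le
          intro c
          calc |x.1.1 c - y.1.1 c|
              ≤ |x.1.1 c - z.1.1 c| + |z.1.1 c - y.1.1 c| := abs_sub_le _ _ _
            _ ≤ (x.1.2 - z.1.2) + (y.1.2 - z.1.2) := by
                rw [abs_sub_comm (x.1.1 c)]
                exact add_le_add (hzx c) (hzy c)
        linarith
  · -- A2
    intro x y w hxw hyw
    have hx1 : ∀ a, |x.1.1 a| ≤ x.1.2 := x.2.1
    have hy1 : ∀ a, |y.1.1 a| ≤ y.1.2 := y.2.1
    have hx2 : x.1.2 ≤ C := x.2.2
    set m : ℝ := min x.1.2 (min y.1.2 ((x.1.2 + y.1.2 - D x.1.1 y.1.1) / 2)) with hmdef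
    have hm1 : m ≤ x.1.2 := min_le_left _ _
    have hm2 : m ≤ y.1.2 := le_trans (min_le_right _ _) (min_le_left _ _)
    have hm3 : m ≤ (x.1.2 + y.1.2 - D x.1.1 y.1.1) / 2 :=
      le_trans (min_le_right _ _) (min_le_right _ _)
    have hr1 : 0 ≤ x.1.2 := le_trans (abs_nonneg _) (hx1 a0)
    have hr2 : 0 ≤ y.1.2 := le_trans (abs_nonneg _) (hy1 a0)
    have hDtri : D x.1.1 y.1.1 ≤ x.1.2 + y.1.2 := by
      apply hD_le
      intro c
      calc |x.1.1 c - y.1.1 c| ≤ |x.1.1 c| + |y.1.1 c| := abs_sub _ _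
        _ ≤ x.1.2 + y.1.2 := add_le_add (hx1 c) (hy1 c)
    have hm0 : 0 ≤ m := by
      apply le_min hr1 (le_min hr2 _)
      linarith
    set zf : σ → ℝ :=
      fun a => max (x.1.1 a - (x.1.2 - m)) (max (y.1.1 a - (y.1.2 - m)) (-m)) with hzfdef
    have hz1 : ∀ a, |zf a - x.1.1 a| ≤ x.1.2 - m := by
      intro a
      rw [abs_le]
      constructor
      · have : x.1.1 a - (x.1.2 - m) ≤ zf a := le_max_left _ _
        linarith
      · have : zf a ≤ x.1.1 a + (x.1.2 - m) := by
          apply max_le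
          · linarith
          apply max_le
          · have h1 : |y.1.1 a - x.1.1 a| ≤ D x.1.1 y.1.1 := by
              rw [hD_symm]; exact hD_ge _ _ a
            have h3 : y.1.1 a - x.1.1 a ≤ D x.1.1 y.1.1 :=
              le_trans (le_abs_self _) h1
            linarith
          · have h4 : -(x.1.1 a) ≤ x.1.2 := le_trans (neg_le_abs _) (hx1 a)
            linarith
        linarith
    have hz2 : ∀ a, |zf a - y.1.1 a| ≤ y.1.2 - m := by
      intro a
      rw [abs_le]
      constructor
      · have : y.1.1 a - (y.1.2 - m) ≤ zf a :=
          le_trans (le_max_left _ _) (le_max_right _ _)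
        linarith
      · have : zf a ≤ y.1.1 a + (y.1.2 - m) := by
          apply max_le
          · have h3 : x.1.1 a - y.1.1 a ≤ D x.1.1 y.1.1 :=
              le_trans (le_abs_self _) (hD_ge _ _ a)
            linarith
          apply max_le
          · linarith
          · have h4 : -(y.1.1 a) ≤ y.1.2 := le_trans (neg_le_abs _) (hy1 a)
            linarith
        linarith
    have hzcone : ∀ a, |zf a| ≤ m := by
      intro a
      rw [abs_le]
      constructor
      · exact le_trans (le_max_right _ _) (le_max_right _ _)
      · apply max_le
        · have h4 : x.1.1 a ≤ x.1.2 := le_trans (le_abs_self _) (hx1 a)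
          linarith
        apply max_le
        · have h4 : y.1.1 a ≤ y.1.2 := le_trans (le_abs_self _) (hy1 a)
          linarith
        · linarith
    refine ⟨⟨(zf, m), hzcone, le_trans hm1 hx2⟩, hz1, hz2, ?_⟩
    have hw1 : x.1.2 ≤ w.1.2 := by
      have h1 := hxw a0
      have h2 : (0:ℝ) ≤ |x.1.1 a0 - w.1.1 a0| := abs_nonneg _
      linarith
    have hw2 : y.1.2 ≤ w.1.2 := by
      have h1 := hyw a0
      have h2 : (0:ℝ) ≤ |y.1.1 a0 - w.1.1 a0| := abs_nonneg _
      linarith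
    have hDw : D x.1.1 y.1.1 ≤ (w.1.2 - x.1.2) + (w.1.2 - y.1.2) := by
      apply hD_le
      intro c
      calc |x.1.1 c - y.1.1 c|
          ≤ |x.1.1 c - w.1.1 c| + |w.1.1 c - y.1.1 c| := abs_sub_le _ _ _
        _ ≤ (w.1.2 - x.1.2) + (w.1.2 - y.1.2) := by
            rw [abs_sub_comm (w.1.1 c)]
            exact add_le_add (hxw c) (hyw c)
    show x.1.2 + y.1.2 - m ≤ w.1.2
    rcases le_total x.1.2 (min y.1.2 ((x.1.2 + y.1.2 - D x.1.1 y.1.1) / 2)) with h | h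
    · have hmx : m = x.1.2 := min_eq_left h
      linarith
    · have hmeq : m = min y.1.2 ((x.1.2 + y.1.2 - D x.1.1 y.1.1) / 2) := min_eq_right h
      rcases le_total y.1.2 ((x.1.2 + y.1.2 - D x.1.1 y.1.1) / 2) with h' | h'
      · have hmx : m = y.1.2 := by rw [hmeq, min_eq_left h']
        linarith
      · have hmx : m = (x.1.2 + y.1.2 - D x.1.1 y.1.1) / 2 := by
          rw [hmeq, min_eq_right h']
        linarith
  · -- the distance formula
    intro a b
    have hDab : D (fun c => d a c) (fun c => d b c) = d a b := by
      apply le_antisymm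
      · apply hD_le
        intro c
        rw [abs_le]
        constructor
        · have h1 := hd_triangle b a c
          have h2 := hd_symm b a
          linarith
        · have h1 := hd_triangle a b c
          linarith
      · have h := hD_ge (fun c => d a c) (fun c => d b c) b
        rw [hd_self b] at h
        simpa [abs_of_nonneg (hd0 a b)] using h
    show d a b = C + C - 2 * min C (min C ((C + C - D (fun c => d a c) (fun c => d b c)) / 2))
    rw [hDab]
    have h1 : (C + C - d a b) / 2 ≤ C := by
      have := hd0 a b
      linarith
    rw [min_eq_right h1, min_eq_right h1]
    ring
end

section
/- In the construction of Lemma 'Metric Space to MCS Model': let Σ be a finite set, d a metric on Σ, K_n the complete graph on Σ, Z the collection of nonempty edge subsets of K_n inducing connected subgraphs, X = Σ ∪ Z ordered by ≼_X, θ > 0, R = θ + (1/2)·Σ_{{σ₁,σ₂} ∈ [Σ]²} d(σ₁,σ₂), and s_X(x) = R for x ∈ Σ while s_X(x) = R − (1/2)·Σ_{{σ₁,σ₂} ∈ x} d(σ₁,σ₂) for x ⊆ [Σ]². Then s_X is a size function on (X, ≼_X): s_X ≥ 0, x₁ ≼_X x₂ implies s_X(x₁) ≤ s_X(x₂), and x₁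 ≼_X x₂ together with s_X(x₁) = s_X(x₂) implies x₁ = x₂. -/
/-- A vertex `σ` is an endpoint of some edge of the edge set `E`. -/
def IsEndpoint {V : Type} [DecidableEq V] (E : Finset (Sym2 V)) (σ : V) : Prop :=
  ∃ e ∈ E, σ ∈ e

/-- An edge set `E` induces a connected subgraph of the complete graph: any two
endpoints of edges of `E` are joined by a walk using only edges of `E`. -/
def InducesConnected {V : Type} [DecidableEq V] (E : Finset (Sym2 V)) : Prop :=
  ∀ u v : V, IsEndpoint E u → IsEndpoint E v →
    (SimpleGraph.fromEdgeSet (↑E : Set (Sym2 V))).Reachable u v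

/-- A member of `Z`: a nonempty set of genuine (non-loop) edges of the complete
graph on `V` that induces a connected subgraph. -/
def GoodEdgeSet {V : Type} [DecidableEq V] (E : Finset (Sym2 V)) : Prop :=
  E.Nonempty ∧ (∀ e ∈ E, ¬ e.IsDiag) ∧ InducesConnected E

/-- The set `X = Σ ∪ Z` of the construction. -/
def MX (V : Type) [DecidableEq V] : Type :=
  V ⊕ {E : Finset (Sym2 V) // GoodEdgeSet E}

/-- The relation `≼_X` of the construction. -/
def leX {V : Type} [DecidableEq V] (x₁ x₂ : MX V) : Prop :=
  x₁ = x₂ ∨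
    match x₁, x₂ with
    | Sum.inr E, Sum.inl σ => IsEndpoint E.val σ
    | Sum.inr E₁, Sum.inr E₂ => E₂.val ⊆ E₁.val
    | _, _ => False

/-- in the construction of the Lemma "Metric Space to MCS Model",
given a metric `d` on the finite set `Σ` (= `V`), `θ > 0`,
`R = θ + (1/2)·Σ_{{σ₁,σ₂} ∈ [Σ]²} d(σ₁,σ₂)`, and `s_X` defined by `s_X(σ) = R`
for vertices and `s_X(E) = R − (1/2)·Σ_{{σ₁,σ₂} ∈ E} d(σ₁,σ₂)` for edge sets,
the function `s_X` is a size function on `(X, ≼_X)`: it is nonnegative and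
satisfies (S1) and (S2).  Here `dE : Sym2 V → ℝ` is the evaluation of `d` on
unordered pairs, i.e. `dE {σ₁,σ₂} = d σ₁ σ₂`. -/
theorem sX_size_function (V : Type) [Fintype V] [DecidableEq V]
    (d : V → V → ℝ)
    (hd_self : ∀ a, d a a = 0)
    (hd_symm : ∀ a b, d a b = d b a)
    (hd_triangle : ∀ a b c, d a c ≤ d a b + d b c)
    (hd_eq : ∀ a b, d a b = 0 → a = b)
    (θ : ℝ) (hθ : 0 < θ)
    (dE : Sym2 V → ℝ) (hdE : ∀ a b : V, dE s(a, b) = d a b)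
    (R : ℝ)
    (hR : R = θ + (1/2) * ∑ e ∈ Finset.univ.filter (fun e : Sym2 V => ¬ e.IsDiag), dE e)
    (sX : MX V → ℝ)
    (hsX_vert : ∀ σ : V, sX (Sum.inl σ) = R)
    (hsX_edge : ∀ E : {E : Finset (Sym2 V) // GoodEdgeSet E},
      sX (Sum.inr E) = R - (1/2) * ∑ e ∈ E.val, dE e) :
    (∀ x : MX V, 0 ≤ sX x) ∧
    (∀ x₁ x₂ : MX V, leX x₁ x₂ → sX x₁ ≤ sX x₂) ∧
    (∀ x₁ x₂ : MX V, leX x₁ x₂ → sX x₁ = sX x₂ → x₁ = x₂) := by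
  have hd_nonneg : ∀ a b, 0 ≤ d a b := by
    intro a b
    have h := hd_triangle a b a
    rw [hd_self, hd_symm b a] at h
    linarith
  have hdE_nonneg : ∀ e : Sym2 V, 0 ≤ dE e := by
    intro e
    induction e using Sym2.inductionOn with
    | hf a b => rw [hdE]; exact hd_nonneg a b
  have hdE_pos : ∀ e : Sym2 V, ¬ e.IsDiag → 0 < dE e := by
    intro e
    induction e using Sym2.inductionOn with
    | hf a b =>
      intro h
      rw [Sym2.isDiag_iff_proj_eq] at h
      rw [hdE]
      rcases lt_or_eq_of_le (hd_nonneg a b) with h' | h'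
      · exact h'
      · exact absurd (hd_eq a b h'.symm) h
  have hsum_nonneg : ∀ (s : Finset (Sym2 V)), 0 ≤ ∑ e ∈ s, dE e :=
    fun s => Finset.sum_nonneg (fun e _ => hdE_nonneg e)
  have hsub : ∀ E : {E : Finset (Sym2 V) // GoodEdgeSet E},
      E.val ⊆ Finset.univ.filter (fun e : Sym2 V => ¬ e.IsDiag) := by
    intro E e he
    simp only [Finset.mem_filter, Finset.mem_univ, true_and]
    exact E.prop.2.1 e he
  have hsum_le : ∀ E : {E : Finset (Sym2 V) // GoodEdgeSet E},
      ∑ e ∈ E.val, dE e ≤ ∑ e ∈ Finset.univ.filter (fun e : Sym2 V => ¬ e.IsDiag), dE e :=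
    fun E => Finset.sum_le_sum_of_subset_of_nonneg (hsub E) (fun e _ _ => hdE_nonneg e)
  have hsum_pos : ∀ E : {E : Finset (Sym2 V) // GoodEdgeSet E},
      0 < ∑ e ∈ E.val, dE e := by
    intro E
    obtain ⟨e₀, he₀⟩ := E.prop.1
    exact Finset.sum_pos' (fun e _ => hdE_nonneg e) ⟨e₀, he₀, hdE_pos e₀ (E.prop.2.1 e₀ he₀)⟩
  refine ⟨?_, ?_, ?_⟩
  · intro x
    cases x with
    | inl σ =>
      rw [hsX_vert, hR]
      have := hsum_nonneg (Finset.univ.filter (fun e : Sym2 V => ¬ e.IsDiag))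
      linarith
    | inr E =>
      rw [hsX_edge, hR]
      have := hsum_le E
      linarith
  · intro x₁ x₂ h
    rcases h with h | h
    · rw [h]
    · cases x₁ with
      | inl σ => cases x₂ <;> simp_all
      | inr E =>
        cases x₂ with
        | inl σ =>
          rw [hsX_edge, hsX_vert]
          have := hsum_nonneg E.val
          linarith
        | inr E₂ =>
          rw [hsX_edge, hsX_edge]
          have : ∑ e ∈ E₂.val, dE e ≤ ∑ e ∈ E.val, dE e :=
            Finset.sum_le_sum_of_subset_of_nonneg h (fun e _ _ => hdE_nonneg e)
          linarith
  · intro x₁ x₂ h heq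
    rcases h with h | h
    · exact h
    · cases x₁ with
      | inl σ => cases x₂ <;> simp_all
      | inr E =>
        cases x₂ with
        | inl σ =>
          rw [hsX_edge, hsX_vert] at heq
          have := hsum_pos E
          linarith
        | inr E₂ =>
          rw [hsX_edge, hsX_edge] at heq
          have hs : ∑ e ∈ E₂.val, dE e = ∑ e ∈ E.val, dE e := by linarith
          have hE : E.val = E₂.val := by
            by_contra hne
            have hss : E₂.val ⊂ E.val := ⟨h, fun h' => hne (Finset.Subset.antisymm h' h)⟩
            obtain ⟨e₀, he₀E, he₀⟩ := Finset.exists_of_ssubset hss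
            have : ∑ e ∈ E₂.val, dE e < ∑ e ∈ E.val, dE e :=
              Finset.sum_lt_sum_of_subset h he₀E he₀
                (hdE_pos e₀ (E.prop.2.1 e₀ he₀E)) (fun e _ _ => hdE_nonneg e)
            linarith
          exact congrArg Sum.inr (Subtype.ext hE)
end

section
/- The Subgraph MCS Model is an MCS Model. Precisely: let G be the set of finite labeled graphs with vertex labels in Σ_V and edge labels in Σ_E, with isomorphic graphs identified, let ⊆ be the subgraph-isomorphism relation, and let α : Σ_V ∪ Σ_E → (0,∞) be a label weighting function; define s_{GVEα}(g) = 0 if g is empty and s_{GVEα}(g) = Σ_{v∈V} α(ℓ_V(v)) + Σ_{e∈E} α(ℓ_E(e)) otherwise. Then ⊆ is a partial order on G, s_{GVEα} satisfies (S1) and (S2), any two graphs have a nonempty finite set of common subelements (so (A1) holds), and (A2) holds: if g₁ ⊆ h and g₂ ⊆ h then there exists g₁₂ ⊆ g₁, g₂ with s_{GVEα}(h) ≥ s_{GVEα}(g₁) + s_{GVEα}(g₂) − s_{GVEα}(g₁₂). -/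
/-- A finite labeled graph with vertex labels in `LV` and edge labels in `LE`.
Vertices are drawn from `ℕ`; label functions are total on `ℕ` resp. `Sym2 ℕ`
(only the values on actual vertices and edges are relevant). -/
structure LGraph (LV LE : Type) where
  verts : Finset ℕ
  edges : Finset (Sym2 ℕ)
  edges_sub : ∀ e ∈ edges, ∀ v ∈ e, v ∈ verts
  edges_nodiag : ∀ e ∈ edges, ¬ e.IsDiag
  ℓV : ℕ → LV
  ℓE : Sym2 ℕ → LE

/-- Label-preserving isomorphism of labeled graphs. -/
def LGraph.Iso {LV LE : Type} (g₁ g₂ : LGraph LV LE) : Prop :=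
  ∃ φ : ℕ → ℕ,
    Set.BijOn φ ↑g₁.verts ↑g₂.verts ∧
    (∀ u ∈ g₁.verts, ∀ v ∈ g₁.verts, (s(u, v) ∈ g₁.edges ↔ s(φ u, φ v) ∈ g₂.edges)) ∧
    (∀ v ∈ g₁.verts, g₂.ℓV (φ v) = g₁.ℓV v) ∧
    (∀ u ∈ g₁.verts, ∀ v ∈ g₁.verts, s(u, v) ∈ g₁.edges →
      g₂.ℓE s(φ u, φ v) = g₁.ℓE s(u, v))

/-- `g'` is a subgraph of `g`: `V' ⊆ V`, `E' ⊆ E ∩ [V']²` (the containment in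
`[V']²` being guaranteed by the structure invariant), with agreeing labels. -/
def LGraph.IsSubgraph {LV LE : Type} (g' g : LGraph LV LE) : Prop :=
  g'.verts ⊆ g.verts ∧ g'.edges ⊆ g.edges ∧
  (∀ v ∈ g'.verts, g'.ℓV v = g.ℓV v) ∧
  (∀ e ∈ g'.edges, g'.ℓE e = g.ℓE e)

/-- `g ⊆ h` (subgraph isomorphism): some subgraph of `h` is isomorphic to `g`. -/
def LGraph.SubIso {LV LE : Type} (g h : LGraph LV LE) : Prop :=
  ∃ g'' : LGraph LV LE, LGraph.IsSubgraph g'' h ∧ LGraph.Iso g'' g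

/-- Weighted size `s_{GVEα}` of a labeled graph (it vanishes on the empty
graph, since both sums are then empty). -/
def LGraph.sizeVE {LV LE : Type} (αV : LV → ℝ) (αE : LE → ℝ)
    (g : LGraph LV LE) : ℝ :=
  ∑ v ∈ g.verts, αV (g.ℓV v) + ∑ e ∈ g.edges, αE (g.ℓE e)

/-!
Isomorphisms preserve sizes, and since all label weights are positive a subgraph of the same
size is the whole graph; this gives (S1), (S2) and antisymmetry. Transitivity comes from
pulling a subgraph back along an isomorphism. The sizes of subelements of `g` are weights of
pairs of subsets of its vertices and edges, hence finitely many, and the empty graph is a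
common subelement of any two graphs. For (A2), realize `g₁`, `g₂` as subgraphs `a`, `b` of `h`:
then `a ∩ b` is a common subelement and, by inclusion–exclusion,
`s(a) + s(b) - s(a ∩ b) = s(a ∪ b) ≤ s(h)`.
-/

theorem Finset.eq_of_subset_of_sum_le_sum {ι M : Type*} [AddCommMonoid M] [PartialOrder M]
    [IsOrderedCancelAddMonoid M] {s t : Finset ι} {f : ι → M} (hst : s ⊆ t)
    (hf : ∀ i ∈ t, 0 < f i) (h : ∑ i ∈ t, f i ≤ ∑ i ∈ s, f i) : s = t := by
  by_contra hne
  obtain ⟨i, hit, his⟩ := Finset.exists_of_ssubset (hst.ssubset_of_ne hne)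
  exact (Finset.sum_lt_sum_of_subset hst hit his (hf i hit) fun j hj _ => (hf j hj).le).not_ge h

namespace LGraph

variable {LV LE : Type}

theorem mem_verts_of_mk_mem_edges (g : LGraph LV LE) {u v : ℕ} (h : s(u, v) ∈ g.edges) :
    u ∈ g.verts ∧ v ∈ g.verts :=
  ⟨g.edges_sub _ h u (Sym2.mem_mk_left u v), g.edges_sub _ h v (Sym2.mem_mk_right u v)⟩

structure IsIsoVia (φ : ℕ → ℕ) (g₁ g₂ : LGraph LV LE) : Prop where
  bijOn : Set.BijOn φ g₁.verts g₂.verts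
  mk_mem_edges_iff : ∀ u ∈ g₁.verts, ∀ v ∈ g₁.verts,
    s(u, v) ∈ g₁.edges ↔ s(φ u, φ v) ∈ g₂.edges
  ℓV_apply : ∀ v ∈ g₁.verts, g₂.ℓV (φ v) = g₁.ℓV v
  ℓE_mk : ∀ u ∈ g₁.verts, ∀ v ∈ g₁.verts, s(u, v) ∈ g₁.edges →
    g₂.ℓE s(φ u, φ v) = g₁.ℓE s(u, v)

theorem Iso.exists_isIsoVia {g₁ g₂ : LGraph LV LE} (h : g₁.Iso g₂) :
    ∃ φ, IsIsoVia φ g₁ g₂ :=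
  let ⟨φ, hbij, hedges, hℓV, hℓE⟩ := h
  ⟨φ, hbij, hedges, hℓV, hℓE⟩

namespace IsIsoVia

variable {φ ψ : ℕ → ℕ} {g₁ g₂ g₃ : LGraph LV LE}

theorem iso (h : IsIsoVia φ g₁ g₂) : g₁.Iso g₂ :=
  ⟨φ, h.bijOn, h.mk_mem_edges_iff, h.ℓV_apply, h.ℓE_mk⟩

theorem id_of_verts_eq_of_edges_eq (hV : g₁.verts = g₂.verts) (hE : g₁.edges = g₂.edges)
    (hℓV : ∀ v ∈ g₁.verts, g₂.ℓV v = g₁.ℓV v) (hℓE : ∀ e ∈ g₁.edges, g₂.ℓE e = g₁.ℓE e) :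
    IsIsoVia id g₁ g₂ where
  bijOn := hV ▸ Set.bijOn_id _
  mk_mem_edges_iff _ _ _ _ := hE ▸ Iff.rfl
  ℓV_apply := hℓV
  ℓE_mk _ _ _ _ he := hℓE _ he

theorem comp (h₁₂ : IsIsoVia φ g₁ g₂) (h₂₃ : IsIsoVia ψ g₂ g₃) : IsIsoVia (ψ ∘ φ) g₁ g₃ where
  bijOn := h₂₃.bijOn.comp h₁₂.bijOn
  mk_mem_edges_iff u hu v hv := (h₁₂.mk_mem_edges_iff u hu v hv).trans
    (h₂₃.mk_mem_edges_iff _ (h₁₂.bijOn.mapsTo hu) _ (h₁₂.bijOn.mapsTo hv))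
  ℓV_apply v hv := (h₂₃.ℓV_apply _ (h₁₂.bijOn.mapsTo hv)).trans (h₁₂.ℓV_apply v hv)
  ℓE_mk u hu v hv he := (h₂₃.ℓE_mk _ (h₁₂.bijOn.mapsTo hu) _ (h₁₂.bijOn.mapsTo hv)
    ((h₁₂.mk_mem_edges_iff u hu v hv).1 he)).trans (h₁₂.ℓE_mk u hu v hv he)

theorem invFunOn (h : IsIsoVia φ g₁ g₂) : IsIsoVia (Function.invFunOn φ g₁.verts) g₂ g₁ := by
  have hinv := h.bijOn.invOn_invFunOn
  refine ⟨h.bijOn.symm hinv.symm, ?_, ?_, ?_⟩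
  -- write every vertex of `g₂` as `φ u`, where `invFunOn` is a left inverse
  all_goals
    intro _ hu₂
    obtain ⟨u, hu, rfl⟩ := h.bijOn.surjOn hu₂
    rw [hinv.1 hu]
  · intro _ hv₂
    obtain ⟨v, hv, rfl⟩ := h.bijOn.surjOn hv₂
    rw [hinv.1 hv]
    exact (h.mk_mem_edges_iff u hu v hv).symm
  · exact (h.ℓV_apply u hu).symm
  · intro _ hv₂
    obtain ⟨v, hv, rfl⟩ := h.bijOn.surjOn hv₂
    rw [hinv.1 hv]
    exact fun he => (h.ℓE_mk u hu v hv ((h.mk_mem_edges_iff u hu v hv).2 he)).symm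

theorem map_mem_edges (h : IsIsoVia φ g₁ g₂) {e : Sym2 ℕ} (he : e ∈ g₁.edges) :
    e.map φ ∈ g₂.edges := by
  induction e using Sym2.ind with
  | h u v =>
    obtain ⟨hu, hv⟩ := g₁.mem_verts_of_mk_mem_edges he
    exact (h.mk_mem_edges_iff u hu v hv).1 he

theorem ℓE_map (h : IsIsoVia φ g₁ g₂) {e : Sym2 ℕ} (he : e ∈ g₁.edges) :
    g₂.ℓE (e.map φ) = g₁.ℓE e := by
  induction e using Sym2.ind with
  | h u v =>
    obtain ⟨hu, hv⟩ := g₁.mem_verts_of_mk_mem_edges he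
    exact h.ℓE_mk u hu v hv he

theorem bijOn_edges (h : IsIsoVia φ g₁ g₂) :
    Set.BijOn (Sym2.map φ) g₁.edges g₂.edges := by
  have hinv := h.bijOn.invOn_invFunOn
  have map_inv {f f' : ℕ → ℕ} {g : LGraph LV LE} (hf : Set.LeftInvOn f' f g.verts)
      (e : Sym2 ℕ) (he : e ∈ g.edges) : (e.map f).map f' = e := by
    rw [Sym2.map_map, Sym2.map_congr (f := f' ∘ f) (g := id) fun v hv => hf (g.edges_sub e he v hv),
      Sym2.map_id, id]
  exact Set.InvOn.bijOn (f' := Sym2.map (Function.invFunOn φ g₁.verts))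
    ⟨map_inv hinv.1, map_inv hinv.2⟩ (fun _ => h.map_mem_edges) (fun _ => h.invFunOn.map_mem_edges)

end IsIsoVia

theorem Iso.refl (g : LGraph LV LE) : g.Iso g :=
  (IsIsoVia.id_of_verts_eq_of_edges_eq rfl rfl (fun _ _ => rfl) fun _ _ => rfl).iso

theorem Iso.symm {g₁ g₂ : LGraph LV LE} (h : g₁.Iso g₂) : g₂.Iso g₁ :=
  let ⟨_, hφ⟩ := h.exists_isIsoVia
  hφ.invFunOn.iso

theorem Iso.trans {g₁ g₂ g₃ : LGraph LV LE} (h₁₂ : g₁.Iso g₂) (h₂₃ : g₂.Iso g₃) : g₁.Iso g₃ :=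
  let ⟨_, hφ⟩ := h₁₂.exists_isIsoVia
  let ⟨_, hψ⟩ := h₂₃.exists_isIsoVia
  (hφ.comp hψ).iso

theorem isSubgraph_refl (g : LGraph LV LE) : g.IsSubgraph g :=
  ⟨subset_rfl, subset_rfl, fun _ _ => rfl, fun _ _ => rfl⟩

theorem IsSubgraph.trans {x y z : LGraph LV LE} (hxy : x.IsSubgraph y) (hyz : y.IsSubgraph z) :
    x.IsSubgraph z :=
  ⟨hxy.1.trans hyz.1, hxy.2.1.trans hyz.2.1,
    fun v hv => (hxy.2.2.1 v hv).trans (hyz.2.2.1 v (hxy.1 hv)),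
    fun e he => (hxy.2.2.2 e he).trans (hyz.2.2.2 e (hxy.2.1 he))⟩

/-- The part of `z` that `ψ` maps into `x`, labeled as in `z`. -/
def comap (ψ : ℕ → ℕ) (x z : LGraph LV LE) : LGraph LV LE where
  verts := z.verts.filter (ψ · ∈ x.verts)
  edges := z.edges.filter (Sym2.map ψ · ∈ x.edges)
  edges_sub e he v hv := Finset.mem_filter.2
    ⟨z.edges_sub e (Finset.mem_filter.1 he).1 v hv,
      x.edges_sub _ (Finset.mem_filter.1 he).2 _ (Sym2.mem_map.2 ⟨v, hv, rfl⟩)⟩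
  edges_nodiag e he := z.edges_nodiag e (Finset.mem_filter.1 he).1
  ℓV := z.ℓV
  ℓE := z.ℓE

theorem comap_isSubgraph (ψ : ℕ → ℕ) (x z : LGraph LV LE) : (comap ψ x z).IsSubgraph z :=
  ⟨Finset.filter_subset _ _, Finset.filter_subset _ _, fun _ _ => rfl, fun _ _ => rfl⟩

theorem IsIsoVia.comap {ψ : ℕ → ℕ} {x y z : LGraph LV LE} (hψ : IsIsoVia ψ z y)
    (hxy : x.IsSubgraph y) : IsIsoVia ψ (comap ψ x z) x where
  bijOn := by
    refine ⟨fun v hv => (Finset.mem_filter.1 hv).2,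
      hψ.bijOn.injOn.mono fun v hv => (Finset.mem_filter.1 hv).1, fun v hv => ?_⟩
    obtain ⟨w, hw, rfl⟩ := hψ.bijOn.surjOn (hxy.1 hv)
    exact ⟨w, Finset.mem_filter.2 ⟨hw, hv⟩, rfl⟩
  mk_mem_edges_iff u hu v hv := by
    have hu' := (Finset.mem_filter.1 hu).1
    have hv' := (Finset.mem_filter.1 hv).1
    simp only [LGraph.comap, Finset.mem_filter, Sym2.map_mk, and_iff_right_iff_imp]
    exact fun he => (hψ.mk_mem_edges_iff u hu' v hv').2 (hxy.2.1 he)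
  ℓV_apply v hv := (hxy.2.2.1 _ (Finset.mem_filter.1 hv).2).trans
    (hψ.ℓV_apply v (Finset.mem_filter.1 hv).1)
  ℓE_mk u hu v hv he := (hxy.2.2.2 _ (Finset.mem_filter.1 he).2).trans
    (hψ.ℓE_mk u (Finset.mem_filter.1 hu).1 v (Finset.mem_filter.1 hv).1
      (Finset.mem_filter.1 he).1)

theorem IsSubgraph.subIso_of_iso {x y z : LGraph LV LE} (hxy : x.IsSubgraph y)
    (hzy : z.Iso y) : x.SubIso z :=
  let ⟨ψ, hψ⟩ := hzy.exists_isIsoVia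
  ⟨comap ψ x z, comap_isSubgraph ψ x z, (hψ.comap hxy).iso⟩

theorem SubIso.refl (g : LGraph LV LE) : g.SubIso g :=
  ⟨g, isSubgraph_refl g, Iso.refl g⟩

theorem SubIso.trans {g₁ g₂ g₃ : LGraph LV LE} (h₁₂ : g₁.SubIso g₂) (h₂₃ : g₂.SubIso g₃) :
    g₁.SubIso g₃ :=
  let ⟨_, ha, ha₁⟩ := h₁₂
  let ⟨_, hb, hb₂⟩ := h₂₃
  let ⟨c, hc, hca⟩ := ha.subIso_of_iso hb₂
  ⟨c, hc.trans hb, hca.trans ha₁⟩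

section Size

variable (αV : LV → ℝ) (αE : LE → ℝ)

def labelWeight (g : LGraph LV LE) (V : Finset ℕ) (E : Finset (Sym2 ℕ)) : ℝ :=
  ∑ v ∈ V, αV (g.ℓV v) + ∑ e ∈ E, αE (g.ℓE e)

theorem sizeVE_eq_labelWeight (g : LGraph LV LE) :
    g.sizeVE αV αE = g.labelWeight αV αE g.verts g.edges :=
  rfl

theorem IsSubgraph.sizeVE_eq_labelWeight {x y : LGraph LV LE} (h : x.IsSubgraph y) :
    x.sizeVE αV αE = y.labelWeight αV αE x.verts x.edges := by
  unfold sizeVE labelWeight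
  congr 1
  · exact Finset.sum_congr rfl fun v hv => by rw [h.2.2.1 v hv]
  · exact Finset.sum_congr rfl fun e he => by rw [h.2.2.2 e he]

theorem labelWeight_union_add_inter (g : LGraph LV LE) (V V' : Finset ℕ)
    (E E' : Finset (Sym2 ℕ)) :
    g.labelWeight αV αE (V ∪ V') (E ∪ E') + g.labelWeight αV αE (V ∩ V') (E ∩ E') =
      g.labelWeight αV αE V E + g.labelWeight αV αE V' E' := by
  have hV := Finset.sum_union_inter (s₁ := V) (s₂ := V') (f := fun v => αV (g.ℓV v))
  have hE := Finset.sum_union_inter (s₁ := E) (s₂ := E') (f := fun e => αE (g.ℓE e))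
  unfold labelWeight
  linarith

theorem IsIsoVia.sizeVE_eq {φ : ℕ → ℕ} {g₁ g₂ : LGraph LV LE} (h : IsIsoVia φ g₁ g₂) :
    g₁.sizeVE αV αE = g₂.sizeVE αV αE :=
  congrArg₂ (· + ·)
    (Finset.sum_nbij φ (fun _ hv => h.bijOn.mapsTo hv) h.bijOn.injOn h.bijOn.surjOn
      fun v hv => by rw [h.ℓV_apply v hv])
    (Finset.sum_nbij (Sym2.map φ) (fun _ => h.map_mem_edges) h.bijOn_edges.injOn
      h.bijOn_edges.surjOn fun e he => by rw [h.ℓE_map he])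

theorem Iso.sizeVE_eq {g₁ g₂ : LGraph LV LE} (h : g₁.Iso g₂) :
    g₁.sizeVE αV αE = g₂.sizeVE αV αE :=
  let ⟨_, hφ⟩ := h.exists_isIsoVia
  hφ.sizeVE_eq αV αE

theorem finite_setOf_sizeVE_subIso (g : LGraph LV LE) :
    {t : ℝ | ∃ h : LGraph LV LE, h.SubIso g ∧ h.sizeVE αV αE = t}.Finite := by
  refine ((g.verts.powerset ×ˢ g.edges.powerset).finite_toSet.image
    fun p => g.labelWeight αV αE p.1 p.2).subset ?_
  rintro t ⟨h, ⟨x, hxg, hxh⟩, rfl⟩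
  refine ⟨(x.verts, x.edges), by simpa using ⟨hxg.1, hxg.2.1⟩, ?_⟩
  rw [← hxh.sizeVE_eq, hxg.sizeVE_eq_labelWeight]

variable {αV αE}

theorem labelWeight_mono (hαV : ∀ a, 0 ≤ αV a) (hαE : ∀ b, 0 ≤ αE b) (g : LGraph LV LE)
    {V V' : Finset ℕ} {E E' : Finset (Sym2 ℕ)} (hV : V ⊆ V') (hE : E ⊆ E') :
    g.labelWeight αV αE V E ≤ g.labelWeight αV αE V' E' :=
  add_le_add (Finset.sum_le_sum_of_subset_of_nonneg hV fun _ _ _ => hαV _)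
    (Finset.sum_le_sum_of_subset_of_nonneg hE fun _ _ _ => hαE _)

theorem eq_of_subset_of_labelWeight_le (hαV : ∀ a, 0 < αV a) (hαE : ∀ b, 0 < αE b)
    (g : LGraph LV LE) {V V' : Finset ℕ} {E E' : Finset (Sym2 ℕ)} (hV : V ⊆ V') (hE : E ⊆ E')
    (h : g.labelWeight αV αE V' E' ≤ g.labelWeight αV αE V E) : V = V' ∧ E = E' := by
  have hsV := Finset.sum_le_sum_of_subset_of_nonneg hV fun v _ _ => (hαV (g.ℓV v)).le
  have hsE := Finset.sum_le_sum_of_subset_of_nonneg hE fun e _ _ => (hαE (g.ℓE e)).le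
  unfold labelWeight at h
  exact ⟨Finset.eq_of_subset_of_sum_le_sum hV (fun _ _ => hαV _) (by linarith),
    Finset.eq_of_subset_of_sum_le_sum hE (fun _ _ => hαE _) (by linarith)⟩

theorem SubIso.sizeVE_le (hαV : ∀ a, 0 ≤ αV a) (hαE : ∀ b, 0 ≤ αE b) {g₁ g₂ : LGraph LV LE}
    (h : g₁.SubIso g₂) : g₁.sizeVE αV αE ≤ g₂.sizeVE αV αE := by
  obtain ⟨x, hx, hx₁⟩ := h
  rw [← hx₁.sizeVE_eq, hx.sizeVE_eq_labelWeight]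
  exact labelWeight_mono hαV hαE g₂ hx.1 hx.2.1

theorem IsSubgraph.iso_of_sizeVE_eq (hαV : ∀ a, 0 < αV a) (hαE : ∀ b, 0 < αE b)
    {x y : LGraph LV LE} (h : x.IsSubgraph y) (hs : x.sizeVE αV αE = y.sizeVE αV αE) :
    x.Iso y := by
  rw [h.sizeVE_eq_labelWeight, LGraph.sizeVE_eq_labelWeight] at hs
  obtain ⟨hV, hE⟩ := eq_of_subset_of_labelWeight_le hαV hαE y h.1 h.2.1 hs.ge
  exact (IsIsoVia.id_of_verts_eq_of_edges_eq hV hE (fun v hv => (h.2.2.1 v hv).symm)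
    fun e he => (h.2.2.2 e he).symm).iso

theorem SubIso.iso_of_sizeVE_eq (hαV : ∀ a, 0 < αV a) (hαE : ∀ b, 0 < αE b)
    {g₁ g₂ : LGraph LV LE} (h : g₁.SubIso g₂) (hs : g₁.sizeVE αV αE = g₂.sizeVE αV αE) :
    g₁.Iso g₂ :=
  let ⟨_, hx, hx₁⟩ := h
  hx₁.symm.trans (hx.iso_of_sizeVE_eq hαV hαE ((hx₁.sizeVE_eq αV αE).trans hs))

theorem SubIso.antisymm (hαV : ∀ a, 0 < αV a) (hαE : ∀ b, 0 < αE b) {g₁ g₂ : LGraph LV LE}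
    (h₁₂ : g₁.SubIso g₂) (h₂₁ : g₂.SubIso g₁) : g₁.Iso g₂ :=
  h₁₂.iso_of_sizeVE_eq hαV hαE <| le_antisymm
    (h₁₂.sizeVE_le (fun a => (hαV a).le) fun b => (hαE b).le)
    (h₂₁.sizeVE_le (fun a => (hαV a).le) fun b => (hαE b).le)

end Size

/-- The empty graph; its label functions are borrowed from `g`, as `LV` or `LE` may be empty. -/
def emptyOf (g : LGraph LV LE) : LGraph LV LE :=
  ⟨∅, ∅, by simp, by simp, g.ℓV, g.ℓE⟩

theorem emptyOf_iso (g h : LGraph LV LE) : (emptyOf g).Iso (emptyOf h) :=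
  IsIsoVia.iso <| IsIsoVia.id_of_verts_eq_of_edges_eq rfl rfl
    (fun _ hv => absurd hv (Finset.notMem_empty _)) fun _ he => absurd he (Finset.notMem_empty _)

theorem emptyOf_subIso (g h : LGraph LV LE) : (emptyOf g).SubIso h :=
  ⟨emptyOf h, ⟨Finset.empty_subset _, Finset.empty_subset _, by simp [emptyOf], by simp [emptyOf]⟩,
    emptyOf_iso h g⟩

def inter (a b h : LGraph LV LE) : LGraph LV LE where
  verts := a.verts ∩ b.verts
  edges := a.edges ∩ b.edges
  edges_sub e he v hv := Finset.mem_inter.2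
    ⟨a.edges_sub e (Finset.mem_inter.1 he).1 v hv, b.edges_sub e (Finset.mem_inter.1 he).2 v hv⟩
  edges_nodiag e he := a.edges_nodiag e (Finset.mem_inter.1 he).1
  ℓV := h.ℓV
  ℓE := h.ℓE

theorem inter_isSubgraph_left {a b h : LGraph LV LE} (ha : a.IsSubgraph h) :
    (inter a b h).IsSubgraph a :=
  ⟨Finset.inter_subset_left, Finset.inter_subset_left,
    fun v hv => (ha.2.2.1 v (Finset.inter_subset_left hv)).symm,
    fun e he => (ha.2.2.2 e (Finset.inter_subset_left he)).symm⟩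

theorem inter_isSubgraph_right {a b h : LGraph LV LE} (hb : b.IsSubgraph h) :
    (inter a b h).IsSubgraph b :=
  ⟨Finset.inter_subset_right, Finset.inter_subset_right,
    fun v hv => (hb.2.2.1 v (Finset.inter_subset_right hv)).symm,
    fun e he => (hb.2.2.2 e (Finset.inter_subset_right he)).symm⟩

theorem exists_subIso_subIso_sizeVE_add_sub_le (hαV : ∀ a, 0 ≤ αV a) (hαE : ∀ b, 0 ≤ αE b)
    {g₁ g₂ h : LGraph LV LE} (h₁ : g₁.SubIso h) (h₂ : g₂.SubIso h) :
    ∃ g₁₂ : LGraph LV LE, g₁₂.SubIso g₁ ∧ g₁₂.SubIso g₂ ∧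
      g₁.sizeVE αV αE + g₂.sizeVE αV αE - g₁₂.sizeVE αV αE ≤ h.sizeVE αV αE := by
  obtain ⟨a, ha, ha₁⟩ := h₁
  obtain ⟨b, hb, hb₂⟩ := h₂
  refine ⟨inter a b h, (inter_isSubgraph_left ha).subIso_of_iso ha₁.symm,
    (inter_isSubgraph_right hb).subIso_of_iso hb₂.symm, ?_⟩
  have hunion := h.labelWeight_union_add_inter αV αE a.verts b.verts a.edges b.edges
  have hle := labelWeight_mono hαV hαE h (Finset.union_subset ha.1 hb.1)
    (Finset.union_subset ha.2.1 hb.2.1)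
  have hinter : (inter a b h).sizeVE αV αE =
      h.labelWeight αV αE (a.verts ∩ b.verts) (a.edges ∩ b.edges) := rfl
  rw [← ha₁.sizeVE_eq, ← hb₂.sizeVE_eq, ha.sizeVE_eq_labelWeight, hb.sizeVE_eq_labelWeight,
    hinter, sizeVE_eq_labelWeight αV αE h]
  linarith

end LGraph

/-- the Subgraph MCS Model `(G, ⊆, s_{GVEα})` is an MCS Model
(with isomorphic graphs identified, so equality in the order axioms and in
(S2) becomes isomorphism): `⊆` is a partial order, `s_{GVEα}` satisfies (S1)
and (S2), the common subelements of any two graphs form a nonempty set whose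
set of sizes is finite and has a maximum (A1), and the diamond inequality (A2)
holds. -/
theorem subgraph_mcs_model_is_mcs_model (LV LE : Type)
    (αV : LV → ℝ) (αE : LE → ℝ)
    (hαV : ∀ a, 0 < αV a) (hαE : ∀ b, 0 < αE b) :
    -- ⊆ is a partial order (antisymmetry up to isomorphism)
    (∀ g : LGraph LV LE, g.SubIso g) ∧
    (∀ g₁ g₂ g₃ : LGraph LV LE, g₁.SubIso g₂ → g₂.SubIso g₃ → g₁.SubIso g₃) ∧
    (∀ g₁ g₂ : LGraph LV LE, g₁.SubIso g₂ → g₂.SubIso g₁ → g₁.Iso g₂) ∧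
    -- (S1)
    (∀ g₁ g₂ : LGraph LV LE, g₁.SubIso g₂ →
      g₁.sizeVE αV αE ≤ g₂.sizeVE αV αE) ∧
    -- (S2) (up to isomorphism)
    (∀ g₁ g₂ : LGraph LV LE, g₁.SubIso g₂ →
      g₁.sizeVE αV αE = g₂.sizeVE αV αE → g₁.Iso g₂) ∧
    -- (A1): common subelements are nonempty and their sizes form a finite set
    -- with a maximum
    (∀ g₁ g₂ : LGraph LV LE, ∃ h : LGraph LV LE, h.SubIso g₁ ∧ h.SubIso g₂) ∧
    (∀ g₁ g₂ : LGraph LV LE,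
      Set.Finite {t : ℝ | ∃ h : LGraph LV LE,
        h.SubIso g₁ ∧ h.SubIso g₂ ∧ h.sizeVE αV αE = t}) ∧
    (∀ g₁ g₂ : LGraph LV LE, ∃ m : ℝ,
      IsGreatest {t : ℝ | ∃ h : LGraph LV LE,
        h.SubIso g₁ ∧ h.SubIso g₂ ∧ h.sizeVE αV αE = t} m) ∧
    -- (A2)
    (∀ g₁ g₂ h : LGraph LV LE, g₁.SubIso h → g₂.SubIso h →
      ∃ g₁₂ : LGraph LV LE, g₁₂.SubIso g₁ ∧ g₁₂.SubIso g₂ ∧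
        g₁.sizeVE αV αE + g₂.sizeVE αV αE - g₁₂.sizeVE αV αE ≤
          h.sizeVE αV αE) := by
  have hαV₀ a := (hαV a).le
  have hαE₀ b := (hαE b).le
  have hfin (g₁ g₂ : LGraph LV LE) : Set.Finite {t : ℝ | ∃ h : LGraph LV LE,
      h.SubIso g₁ ∧ h.SubIso g₂ ∧ h.sizeVE αV αE = t} :=
    (LGraph.finite_setOf_sizeVE_subIso αV αE g₁).subset fun _ ⟨h, h₁, _, ht⟩ => ⟨h, h₁, ht⟩
  refine ⟨LGraph.SubIso.refl, fun _ _ _ => LGraph.SubIso.trans,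
    fun _ _ => LGraph.SubIso.antisymm hαV hαE, fun _ _ => LGraph.SubIso.sizeVE_le hαV₀ hαE₀,
    fun _ _ => LGraph.SubIso.iso_of_sizeVE_eq hαV hαE,
    fun g₁ g₂ => ⟨g₁.emptyOf, g₁.emptyOf_subIso g₁, g₁.emptyOf_subIso g₂⟩, hfin,
    fun g₁ g₂ => ⟨_, (hfin g₁ g₂).isCompact.isGreatest_sSup
      ⟨_, g₁.emptyOf, g₁.emptyOf_subIso g₁, g₁.emptyOf_subIso g₂, rfl⟩⟩,
    fun _ _ _ => LGraph.exists_subIso_subIso_sizeVE_add_sub_le hαV₀ hαE₀⟩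
end
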